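/- For positive definite matrices p, q and r, s ≥ 0 with r + s ≤ 1 and r < 1, the t-spectral mean satisfies the semigroup-type property p ♮_{r+s} q = (p ♮_r q) ♮_{s/(1-r)} q. -/

import Mathlib

open Matrix
open scoped ComplexOrder

noncomputable def mpow {m : Type*} [Fintype m] [DecidableEq m]
    (A : Matrix m m ℂ) (t : ℝ) : Matrix m m ℂ :=
  if h : A.IsHermitian then
    (h.eigenvectorUnitary : Matrix m m ℂ) *
      Matrix.diagonal (fun i => ((h.eigenvalues i ^ t : ℝ) : ℂ)) *
      star (h.eigenvectorUnitary : Matrix m m ℂ)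
  else A

/-- t-metric geometric mean `A ♯ₜ B`. -/
noncomputable def msharp {m : Type*} [Fintype m] [DecidableEq m]
    (A B : Matrix m m ℂ) (t : ℝ) : Matrix m m ℂ :=
  mpow A (1/2) * mpow (mpow A (-(1/2)) * B * mpow A (-(1/2))) t * mpow A (1/2)

/-- t-spectral geometric mean `A ♮ₜ B`. -/
noncomputable def mnat {m : Type*} [Fintype m] [DecidableEq m]
    (A B : Matrix m m ℂ) (t : ℝ) : Matrix m m ℂ :=
  mpow (msharp A⁻¹ B (1/2)) t * A * mpow (msharp A⁻¹ B (1/2)) t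

/-- Eigenvalues in non-increasing order (junk value `0` if not Hermitian). -/
noncomputable def eigsDesc {n : ℕ} (A : Matrix (Fin n) (Fin n) ℂ) : Fin n → ℝ :=
  if h : A.IsHermitian then (fun i => h.eigenvalues (Tuple.sort h.eigenvalues i.rev)) else 0

/-- `x` is log-majorized by `y` (both listed in non-increasing order). -/
def LogMaj {n : ℕ} (x y : Fin n → ℝ) : Prop :=
  (∀ k : ℕ, ∏ i ∈ Finset.univ.filter (fun i : Fin n => (i : ℕ) < k), x i ≤
      ∏ i ∈ Finset.univ.filter (fun i : Fin n => (i : ℕ) < k), y i) ∧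
    ∏ i, x i = ∏ i, y i

/-- k-th compound matrix. -/
noncomputable def compound {n : ℕ} (k : ℕ) (A : Matrix (Fin n) (Fin n) ℂ) :
    Matrix {s : Finset (Fin n) // s.card = k} {s : Finset (Fin n) // s.card = k} ℂ :=
  fun s t => (A.submatrix (fun i => (s.1.orderIsoOfFin s.2 i : Fin n))
    (fun i => (t.1.orderIsoOfFin t.2 i : Fin n))).det

/-!
Let `f = p⁻¹ ♯ q`; it is the unique positive definite solution of the Riccati equation
`f p f = q`, and `p ♮_t q = f^t p f^t`. Then `f^(1-r)` solves the Riccati equation with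
`p ♮_r q` in place of `p`, so `(p ♮_r q)⁻¹ ♯ q = f^(1-r)` and
`(p ♮_r q) ♮_u q = f^((1-r)u) f^r p f^r f^((1-r)u) = p ♮_(r+(1-r)u) q`.
-/

section
open scoped MatrixOrder

variable {k : Type*} [Fintype k] [DecidableEq k] {A : Matrix k k ℂ}

lemma mpow_eq_rpow (hA : A.PosSemidef) (t : ℝ) : mpow A t = A ^ t := by
  rw [CFC.rpow_eq_cfc_real hA.nonneg, hA.1.cfc_eq, mpow, dif_pos hA.1]
  rfl

lemma mpow_half_unique {C Y : Matrix k k ℂ} (hY : Y.PosSemidef) (h : Y * Y = C) :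
    mpow C (1 / 2) = Y := by
  have hC : C.PosSemidef := h ▸ hY.1.isSelfAdjoint.mul_self_nonneg.posSemidef
  rw [mpow_eq_rpow hC, ← CFC.sqrt_eq_rpow, CFC.sqrt_unique h hY.nonneg]

section PosDef

variable (hA : A.PosDef)
include hA

lemma posDef_mpow (t : ℝ) : (mpow A t).PosDef := by
  rw [mpow_eq_rpow hA.posSemidef]
  exact (IsStrictlyPositive.rpow A t hA.isStrictlyPositive).posDef

lemma mpow_add (a b : ℝ) : mpow A (a + b) = mpow A a * mpow A b := by
  simp only [mpow_eq_rpow hA.posSemidef]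
  exact CFC.rpow_add hA.isUnit

lemma mpow_zero : mpow A 0 = 1 := by
  rw [mpow_eq_rpow hA.posSemidef, CFC.rpow_zero A hA.posSemidef.nonneg]

lemma mpow_one : mpow A 1 = A := by
  rw [mpow_eq_rpow hA.posSemidef, CFC.rpow_one A hA.posSemidef.nonneg]

lemma mpow_half_mul_mpow_half : mpow A (1 / 2) * mpow A (1 / 2) = A := by
  rw [← mpow_add hA, add_halves, mpow_one hA]

lemma mpow_mpow (a b : ℝ) : mpow (mpow A a) b = mpow A (a * b) := by
  rcases eq_or_ne a 0 with rfl | ha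
  · rw [mpow_zero hA, zero_mul, mpow_zero hA, mpow_eq_rpow PosSemidef.one, CFC.one_rpow]
  · rw [mpow_eq_rpow (posDef_mpow hA a).posSemidef, mpow_eq_rpow hA.posSemidef,
      mpow_eq_rpow hA.posSemidef, CFC.rpow_rpow A a b ha hA.isStrictlyPositive]

lemma mpow_inv (t : ℝ) : mpow A⁻¹ t = mpow A (-t) := by
  have h : A⁻¹ = mpow A (-1) := by
    rw [mpow_eq_rpow hA.posSemidef, nonsing_inv_eq_ringInverse,
      CFC.inverse_eq_rpow_neg_one hA.isStrictlyPositive]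
  rw [h, mpow_mpow hA, neg_one_mul]

lemma mpow_mul_mpow_mul_mul_mpow_mul_mpow (a b : ℝ) (X : Matrix k k ℂ) :
    mpow A a * (mpow A b * X * mpow A b) * mpow A a = mpow A (a + b) * X * mpow A (a + b) := by
  nth_rw 2 [add_comm]
  simp only [mpow_add hA, mul_assoc]

lemma posDef_mpow_mul_mul_mpow {X : Matrix k k ℂ} (hX : X.PosDef) (t : ℝ) :
    (mpow A t * X * mpow A t).PosDef := by
  have hS := posDef_mpow hA t
  nth_rw 2 [← hS.1.eq]
  exact hX.mul_mul_conjTranspose_same (vecMul_injective_iff_isUnit.mpr hS.isUnit)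

lemma mul_mul_eq_iff_mul_self_mpow_half_conj (X B : Matrix k k ℂ) :
    X * A * X = B ↔ (mpow A (1 / 2) * X * mpow A (1 / 2)) * (mpow A (1 / 2) * X * mpow A (1 / 2))
      = mpow A (1 / 2) * B * mpow A (1 / 2) := by
  have hSS := mpow_half_mul_mpow_half hA
  have hS := (posDef_mpow hA (1 / 2)).isUnit
  generalize mpow A (1 / 2) = S at hSS hS ⊢
  subst hSS
  constructor
  · rintro rfl
    simp only [mul_assoc]
  · intro h
    refine hS.mul_right_cancel (hS.mul_left_cancel ?_)
    simpa only [mul_assoc] using h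

lemma msharp_inv (B : Matrix k k ℂ) (t : ℝ) : msharp A⁻¹ B t =
    mpow A (-(1 / 2)) * mpow (mpow A (1 / 2) * B * mpow A (1 / 2)) t * mpow A (-(1 / 2)) := by
  rw [msharp, mpow_inv hA, mpow_inv hA, neg_neg]

lemma posDef_msharp_inv {B : Matrix k k ℂ} (hB : B.PosDef) (t : ℝ) :
    (msharp A⁻¹ B t).PosDef := by
  rw [msharp_inv hA]
  exact posDef_mpow_mul_mul_mpow hA (posDef_mpow (posDef_mpow_mul_mul_mpow hA hB _) t) _

lemma msharp_inv_half_mul_mul {B : Matrix k k ℂ} (hB : B.PosDef) :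
    msharp A⁻¹ B (1 / 2) * A * msharp A⁻¹ B (1 / 2) = B := by
  rw [mul_mul_eq_iff_mul_self_mpow_half_conj hA, msharp_inv hA,
    mpow_mul_mpow_mul_mul_mpow_mul_mpow hA, add_neg_cancel, mpow_zero hA, one_mul, mul_one]
  exact mpow_half_mul_mpow_half (posDef_mpow_mul_mul_mpow hA hB _)

lemma msharp_inv_half_eq_of_mul_mul {B X : Matrix k k ℂ} (hX : X.PosDef) (h : X * A * X = B) :
    msharp A⁻¹ B (1 / 2) = X := by
  rw [msharp_inv hA, mpow_half_unique (posDef_mpow_mul_mul_mpow hA hX _).posSemidef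
      ((mul_mul_eq_iff_mul_self_mpow_half_conj hA X B).mp h),
    mpow_mul_mpow_mul_mul_mpow_mul_mpow hA, neg_add_cancel, mpow_zero hA, one_mul, mul_one]

end PosDef

variable {p q : Matrix k k ℂ} (hp : p.PosDef) (hq : q.PosDef)
include hp hq

lemma msharp_inv_half_mnat (r : ℝ) :
    msharp (mnat p q r)⁻¹ q (1 / 2) = mpow (msharp p⁻¹ q (1 / 2)) (1 - r) := by
  have hf := posDef_msharp_inv hp hq (1 / 2)
  refine msharp_inv_half_eq_of_mul_mul (posDef_mpow_mul_mul_mpow hf hp r) (posDef_mpow hf _) ?_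
  rw [mpow_mul_mpow_mul_mul_mpow_mul_mpow hf, sub_add_cancel, mpow_one hf,
    msharp_inv_half_mul_mul hp hq]

theorem mnat_mnat (r t : ℝ) : mnat (mnat p q r) q t = mnat p q (r + (1 - r) * t) := by
  have hf := posDef_msharp_inv hp hq (1 / 2)
  rw [mnat, msharp_inv_half_mnat hp hq, mpow_mpow hf]
  unfold mnat
  rw [mpow_mul_mpow_mul_mul_mpow_mul_mpow hf, add_comm]

end

theorem mnat_add_exponent_general {n : ℕ} (p q : Matrix (Fin n) (Fin n) ℂ)
    (hp : p.PosDef) (hq : q.PosDef) (r s : ℝ) (hr1 : r < 1) :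
    mnat p q (r + s) = mnat (mnat p q r) q (s / (1 - r)) := by
  rw [mnat_mnat hp hq, mul_div_cancel₀ s (sub_ne_zero.mpr hr1.ne')]

theorem mnat_add_exponent {n : ℕ} (p q : Matrix (Fin n) (Fin n) ℂ)
    (hp : p.PosDef) (hq : q.PosDef) (r s : ℝ)
    (hr : 0 ≤ r) (hs : 0 ≤ s) (hrs : r + s ≤ 1) (hr1 : r < 1) :
    mnat p q (r + s) = mnat (mnat p q r) q (s / (1 - r)) :=
  mnat_add_exponent_general p q hp hq r s hr1
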